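/- Let ν ∈ ℤ. Let μ be the measure on (0,∞) × (−π,π) × ℝ with density r with respect to Lebesgue measure (i.e., dμ = r·dr·dφ·dz), and let μ' be the measure on (0,∞) × (−π/2,π/2) × ℝ with density 2r with respect to Lebesgue measure (i.e., dμ' = 2r·dr·dφ·dz). Then the map U_ν defined by (U_ν Ψ)(r,φ,z) := e^{−iνφ}·Ψ(r, 2φ, z) is a well-defined surjective linear isometry (unitary operator) from L²((0,∞)×(−π,π)×ℝ, μ; ℂ) onto L²((0,∞)×(−π/2,π/2)×ℝ, μ'; ℂ). [This is the unitarity of the operator U_ν constructed in the proof of Lemma 5, mapping the single-particle space L²(ℝ³) in cylindrical coordinates onto the two-particle relative space L²(H, 2d³r) in cylindrical coordinates.] -/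

import Mathlib

open MeasureTheory Real Set

noncomputable section

/-- Cylindrical-coordinate domain of the slit space: `(0,∞) × (-π,π) × ℝ`. -/
def slitDom3 : Set (ℝ × ℝ × ℝ) := {p | p.1 ∈ Ioi (0 : ℝ) ∧ p.2.1 ∈ Ioo (-π) π}

/-- Cylindrical-coordinate domain of the open half-space:
`(0,∞) × (-π/2,π/2) × ℝ`. -/
def halfDom3 : Set (ℝ × ℝ × ℝ) :=
  {p | p.1 ∈ Ioi (0 : ℝ) ∧ p.2.1 ∈ Ioo (-(π / 2)) (π / 2)}

/-- The measure `r·dr·dφ·dz` on `(0,∞) × (-π,π) × ℝ`. -/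
def μSlit3 : Measure (ℝ × ℝ × ℝ) :=
  (volume.restrict slitDom3).withDensity fun p => ENNReal.ofReal p.1

/-- The measure `2r·dr·dφ·dz` on `(0,∞) × (-π/2,π/2) × ℝ`. -/
def μHalf3 : Measure (ℝ × ℝ × ℝ) :=
  (volume.restrict halfDom3).withDensity fun p => ENNReal.ofReal (2 * p.1)

namespace HalvingAux

open ENNReal

lemma measurableSet_slitDom3 : MeasurableSet slitDom3 := by
  have h : slitDom3 = (Ioi (0:ℝ)) ×ˢ ((Ioo (-π) π) ×ˢ (univ : Set ℝ)) := by
    ext p; simp [slitDom3, Set.mem_prod, and_assoc]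
  rw [h]; exact measurableSet_Ioi.prod (measurableSet_Ioo.prod .univ)

lemma measurableSet_halfDom3 : MeasurableSet halfDom3 := by
  have h : halfDom3 = (Ioi (0:ℝ)) ×ˢ ((Ioo (-(π/2)) (π/2)) ×ˢ (univ : Set ℝ)) := by
    ext p; simp [halfDom3, Set.mem_prod, and_assoc]
  rw [h]; exact measurableSet_Ioi.prod (measurableSet_Ioo.prod .univ)

def T : (ℝ × ℝ × ℝ) ≃ᵐ (ℝ × ℝ × ℝ) :=
  (MeasurableEquiv.refl ℝ).prodCongr
    (((Homeomorph.mulLeft₀ (2:ℝ) two_ne_zero).toMeasurableEquiv).prodCongr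
      (MeasurableEquiv.refl ℝ))

lemma T_apply (p : ℝ × ℝ × ℝ) : T p = (p.1, 2 * p.2.1, p.2.2) := rfl

lemma T_symm_fst (p : ℝ × ℝ × ℝ) : (T.symm p).1 = p.1 := rfl

lemma T_preimage : ⇑T ⁻¹' slitDom3 = halfDom3 := by
  ext p
  simp only [mem_preimage, T_apply, slitDom3, halfDom3, mem_setOf_eq, mem_Ioi, mem_Ioo]
  constructor
  · rintro ⟨a, b, d⟩; exact ⟨a, by linarith, by linarith⟩
  · rintro ⟨a, b, d⟩; exact ⟨a, by linarith, by linarith⟩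

lemma prod_smul_left {α β : Type*} [MeasurableSpace α] [MeasurableSpace β]
    (μ : Measure α) (ν : Measure β) [SFinite ν] (c : ℝ≥0∞) :
    (c • μ).prod ν = c • (μ.prod ν) := by
  ext s hs
  rw [Measure.prod_apply hs, Measure.smul_apply, Measure.prod_apply hs,
    lintegral_smul_measure]

lemma prod_smul_right {α β : Type*} [MeasurableSpace α] [MeasurableSpace β]
    (μ : Measure α) (ν : Measure β) [SFinite ν] (c : ℝ≥0∞) (hc : c ≠ ∞) :
    μ.prod (c • ν) = c • (μ.prod ν) := by
  ext s hs
  rw [Measure.prod_apply hs, Measure.smul_apply, Measure.prod_apply hs]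
  simp only [Measure.smul_apply, smul_eq_mul]
  rw [lintegral_const_mul' _ _ hc]

lemma map_T_volume :
    Measure.map T (volume : Measure (ℝ × ℝ × ℝ)) = ENNReal.ofReal 2⁻¹ • volume := by
  have h2 : Measure.map (fun x : ℝ => 2 * x) volume
      = ENNReal.ofReal |(2:ℝ)⁻¹| • volume := Real.map_volume_mul_left two_ne_zero
  have hTfun : ⇑T = Prod.map (id : ℝ → ℝ)
      (Prod.map (fun x : ℝ => 2 * x) (id : ℝ → ℝ)) := rfl
  have hinner : Measure.map (Prod.map (fun x : ℝ => 2 * x) (id : ℝ → ℝ))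
      (volume : Measure (ℝ × ℝ)) = ENNReal.ofReal |(2:ℝ)⁻¹| • volume := by
    rw [Measure.volume_eq_prod, ← Measure.map_prod_map _ _ (measurable_const_mul 2) measurable_id,
      h2, Measure.map_id, prod_smul_left, ← Measure.volume_eq_prod]
  rw [hTfun, Measure.volume_eq_prod (α := ℝ) (β := ℝ × ℝ),
    ← Measure.map_prod_map _ _ measurable_id
      ((measurable_const_mul 2).prodMap measurable_id),
    Measure.map_id, hinner, prod_smul_right _ _ _ (by simp),
    ← Measure.volume_eq_prod, show |(2:ℝ)⁻¹| = 2⁻¹ from abs_of_pos (by norm_num)]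

lemma map_withDensity_equiv {α β : Type*} [MeasurableSpace α] [MeasurableSpace β]
    (e : α ≃ᵐ β) (μ : Measure α) {f : α → ℝ≥0∞} (hf : Measurable f) :
    (μ.withDensity f).map e = (μ.map e).withDensity (f ∘ ⇑e.symm) := by
  ext s hs
  rw [MeasurableEquiv.map_apply, withDensity_apply _ (hs.preimage e.measurable),
    withDensity_apply _ hs, setLIntegral_map hs (hf.comp e.symm.measurable) e.measurable]
  refine setLIntegral_congr_fun (hs.preimage e.measurable) (fun x _ => ?_)
  simp

lemma hT : MeasurePreserving ⇑T μHalf3 μSlit3 := by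
  refine ⟨T.measurable, ?_⟩
  have hg : Measurable fun p : ℝ × ℝ × ℝ => ENNReal.ofReal (2 * p.1) :=
    (measurable_fst.const_mul 2).ennreal_ofReal
  rw [μHalf3, map_withDensity_equiv T _ hg]
  have h1 : (volume.restrict halfDom3).map T = (Measure.map T volume).restrict slitDom3 := by
    rw [Measure.restrict_map T.measurable measurableSet_slitDom3, T_preimage]
  have h2 : ((fun p : ℝ × ℝ × ℝ => ENNReal.ofReal (2 * p.1)) ∘ ⇑T.symm)
      = fun p : ℝ × ℝ × ℝ => ENNReal.ofReal (2 * p.1) := rfl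
  rw [h1, map_T_volume, Measure.restrict_smul, withDensity_smul_measure, h2, μSlit3]
  rw [← withDensity_smul _ hg]
  congr 1
  funext p
  show ENNReal.ofReal 2⁻¹ * ENNReal.ofReal (2 * p.1) = ENNReal.ofReal p.1
  rw [← ENNReal.ofReal_mul (by norm_num)]
  congr 1
  ring

lemma hT' : MeasurePreserving ⇑T.symm μSlit3 μHalf3 := hT.symm T

section Phase

variable {α : Type*} [MeasurableSpace α] {μ : Measure α}

lemma memLp_mul_phase {c : α → ℂ} (hc : Measurable c) (h1 : ∀ x, ‖c x‖ = 1)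
    (f : Lp ℂ 2 μ) : MemLp (fun x => c x * f x) 2 μ := by
  refine ⟨hc.aestronglyMeasurable.mul (Lp.aestronglyMeasurable f), ?_⟩
  have h : eLpNorm (fun x => c x * f x) 2 μ = eLpNorm (⇑f) 2 μ :=
    eLpNorm_congr_norm_ae (Filter.Eventually.of_forall fun x => by
      simp [norm_mul, h1 x])
  rw [h]; exact Lp.eLpNorm_lt_top f

def phaseL (c : α → ℂ) (hc : Measurable c) (h1 : ∀ x, ‖c x‖ = 1) :
    Lp ℂ 2 μ →ₗ[ℂ] Lp ℂ 2 μ where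
  toFun f := (memLp_mul_phase hc h1 f).toLp _
  map_add' f g := by
    apply Lp.ext
    filter_upwards [MemLp.coeFn_toLp (memLp_mul_phase hc h1 (f + g)),
      MemLp.coeFn_toLp (memLp_mul_phase hc h1 f),
      MemLp.coeFn_toLp (memLp_mul_phase hc h1 g),
      Lp.coeFn_add f g,
      Lp.coeFn_add ((memLp_mul_phase hc h1 f).toLp _) ((memLp_mul_phase hc h1 g).toLp _)]
      with x hfg hf hg hadd hadd2
    rw [hfg, hadd2, Pi.add_apply, hf, hg, hadd, Pi.add_apply, mul_add]
  map_smul' a f := by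
    apply Lp.ext
    filter_upwards [MemLp.coeFn_toLp (memLp_mul_phase hc h1 (a • f)),
      MemLp.coeFn_toLp (memLp_mul_phase hc h1 f),
      Lp.coeFn_smul a f,
      Lp.coeFn_smul a ((memLp_mul_phase hc h1 f).toLp _)] with x h₁ h₂ h₃ h₄
    rw [RingHom.id_apply, h₁, h₄, Pi.smul_apply, h₂, h₃, Pi.smul_apply,
      smul_eq_mul, smul_eq_mul]
    ring

lemma phaseL_coeFn (c : α → ℂ) (hc : Measurable c) (h1 : ∀ x, ‖c x‖ = 1)
    (f : Lp ℂ 2 μ) : ⇑(phaseL c hc h1 f) =ᵐ[μ] fun x => c x * f x :=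
  MemLp.coeFn_toLp (memLp_mul_phase hc h1 f)

lemma phaseL_norm (c : α → ℂ) (hc : Measurable c) (h1 : ∀ x, ‖c x‖ = 1)
    (f : Lp ℂ 2 μ) : ‖phaseL c hc h1 f‖ = ‖f‖ := by
  rw [Lp.norm_def, Lp.norm_def, eLpNorm_congr_ae (phaseL_coeFn c hc h1 f)]
  congr 1
  exact eLpNorm_congr_norm_ae (Filter.Eventually.of_forall fun x => by
    simp [norm_mul, h1 x])

def phaseEquiv (c c' : α → ℂ) (hc : Measurable c) (hc' : Measurable c')
    (h1 : ∀ x, ‖c x‖ = 1) (h1' : ∀ x, ‖c' x‖ = 1)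
    (hinv : ∀ x, c x * c' x = 1) (hinv' : ∀ x, c' x * c x = 1) :
    Lp ℂ 2 μ ≃ₗᵢ[ℂ] Lp ℂ 2 μ :=
  { (LinearEquiv.ofLinear (phaseL c hc h1) (phaseL c' hc' h1')
      (by
        apply LinearMap.ext; intro f
        apply Lp.ext
        filter_upwards [phaseL_coeFn c hc h1 (phaseL c' hc' h1' f),
          phaseL_coeFn c' hc' h1' f] with x hx hx'
        simp only [LinearMap.comp_apply, LinearMap.id_apply]
        rw [hx, hx', ← mul_assoc, hinv x, one_mul])
      (by
        apply LinearMap.ext; intro f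
        apply Lp.ext
        filter_upwards [phaseL_coeFn c' hc' h1' (phaseL c hc h1 f),
          phaseL_coeFn c hc h1 f] with x hx hx'
        simp only [LinearMap.comp_apply, LinearMap.id_apply]
        rw [hx, hx', ← mul_assoc, hinv' x, one_mul]) : Lp ℂ 2 μ ≃ₗ[ℂ] Lp ℂ 2 μ) with
    norm_map' := phaseL_norm c hc h1 }

lemma phaseEquiv_coeFn (c c' : α → ℂ) (hc : Measurable c) (hc' : Measurable c')
    (h1 : ∀ x, ‖c x‖ = 1) (h1' : ∀ x, ‖c' x‖ = 1)
    (hinv : ∀ x, c x * c' x = 1) (hinv' : ∀ x, c' x * c x = 1) (f : Lp ℂ 2 μ) :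
    ⇑(phaseEquiv c c' hc hc' h1 h1' hinv hinv' f) =ᵐ[μ] fun x => c x * f x :=
  phaseL_coeFn c hc h1 f

end Phase

def compEquiv : Lp ℂ 2 μSlit3 ≃ₗᵢ[ℂ] Lp ℂ 2 μHalf3 :=
  { (LinearEquiv.ofLinear (Lp.compMeasurePreservingₗ ℂ ⇑T hT)
      (Lp.compMeasurePreservingₗ ℂ ⇑T.symm hT')
      (by
        apply LinearMap.ext; intro f
        apply Lp.ext
        have h1 := Lp.coeFn_compMeasurePreserving (Lp.compMeasurePreserving ⇑T.symm hT' f) hT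
        have h2 : ⇑(Lp.compMeasurePreserving ⇑T.symm hT' f) ∘ ⇑T =ᵐ[μHalf3] (⇑f ∘ ⇑T.symm) ∘ ⇑T :=
          hT.quasiMeasurePreserving.ae_eq_comp (Lp.coeFn_compMeasurePreserving f hT')
        filter_upwards [h1, h2] with x hx hx'
        exact hx.trans (hx'.trans (by simp)))
      (by
        apply LinearMap.ext; intro f
        apply Lp.ext
        have h1 := Lp.coeFn_compMeasurePreserving (Lp.compMeasurePreserving ⇑T hT f) hT'
        have h2 : ⇑(Lp.compMeasurePreserving ⇑T hT f) ∘ ⇑T.symm =ᵐ[μSlit3] (⇑f ∘ ⇑T) ∘ ⇑T.symm :=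
          hT'.quasiMeasurePreserving.ae_eq_comp (Lp.coeFn_compMeasurePreserving f hT)
        filter_upwards [h1, h2] with x hx hx'
        exact hx.trans (hx'.trans (by simp))) : Lp ℂ 2 μSlit3 ≃ₗ[ℂ] Lp ℂ 2 μHalf3) with
    norm_map' := fun f => Lp.norm_compMeasurePreserving f hT }

lemma compEquiv_coeFn (f : Lp ℂ 2 μSlit3) :
    ⇑(compEquiv f) =ᵐ[μHalf3] ⇑f ∘ ⇑T :=
  Lp.coeFn_compMeasurePreserving f hT

end HalvingAux

/-- **Unitarity of `U_ν` (proof of Lemma 5).** The map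
`(U_ν Ψ)(r,φ,z) = e^{-iνφ}·Ψ(r,2φ,z)` is a well-defined unitary from
`L²((0,∞)×(-π,π)×ℝ, r·dr·dφ·dz; ℂ)` onto
`L²((0,∞)×(-π/2,π/2)×ℝ, 2r·dr·dφ·dz; ℂ)`. -/
theorem halving_map_unitary_cylindrical (ν : ℤ) :
    ∃ U : Lp ℂ 2 μSlit3 ≃ₗᵢ[ℂ] Lp ℂ 2 μHalf3,
      ∀ ψ : Lp ℂ 2 μSlit3, ∀ᵐ p ∂μHalf3,
        (U ψ) p = Complex.exp ((-(ν * p.2.1) : ℝ) * Complex.I)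
          * ψ (p.1, 2 * p.2.1, p.2.2) := by
  classical
  set c : ℝ × ℝ × ℝ → ℂ := fun p => Complex.exp ((-(ν * p.2.1) : ℝ) * Complex.I) with hc_def
  set c' : ℝ × ℝ × ℝ → ℂ := fun p => Complex.exp (((ν * p.2.1 : ℝ) : ℂ) * Complex.I) with hc'_def
  have hcont : Continuous fun p : ℝ × ℝ × ℝ => ((-(ν * p.2.1) : ℝ) : ℂ) := by fun_prop
  have hcont' : Continuous fun p : ℝ × ℝ × ℝ => (((ν * p.2.1) : ℝ) : ℂ) := by fun_prop
  have hcm : Measurable c := (Complex.continuous_exp.comp (hcont.mul continuous_const)).measurable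
  have hcm' : Measurable c' :=
    (Complex.continuous_exp.comp (hcont'.mul continuous_const)).measurable
  have h1 : ∀ p, ‖c p‖ = 1 := fun p => by
    exact Complex.norm_exp_ofReal_mul_I _
  have h1' : ∀ p, ‖c' p‖ = 1 := fun p => by
    exact Complex.norm_exp_ofReal_mul_I _
  have hinv : ∀ p, c p * c' p = 1 := fun p => by
    rw [hc_def, hc'_def, ← Complex.exp_add,
      show ((-(ν * p.2.1) : ℝ) : ℂ) * Complex.I + ((ν * p.2.1 : ℝ) : ℂ) * Complex.I = 0 by
        push_cast; ring,
      Complex.exp_zero]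
  have hinv' : ∀ p, c' p * c p = 1 := fun p => by rw [mul_comm]; exact hinv p
  refine ⟨HalvingAux.compEquiv.trans
    (HalvingAux.phaseEquiv c c' hcm hcm' h1 h1' hinv hinv'), fun ψ => ?_⟩
  have hC := HalvingAux.compEquiv_coeFn ψ
  have hM := HalvingAux.phaseEquiv_coeFn c c' hcm hcm' h1 h1' hinv hinv'
    (HalvingAux.compEquiv ψ)
  filter_upwards [hC, hM] with p hp hq
  show (HalvingAux.phaseEquiv c c' hcm hcm' h1 h1' hinv hinv'
    (HalvingAux.compEquiv ψ)) p = _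
  rw [hq, hp]
  rfl
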